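/- The commutator subgroup B_4' of the braid group B_4 is generated by the three elements σ_1σ_2^{−1}, σ_1(σ_1σ_2^{−1})σ_1^{−1}, and σ_1σ_3^{−1}. -/

import Mathlib

/-- Artin braid relators for the braid group on `n` strands, with generators
`FreeGroup.of i` corresponding to `σ_{i+1}` for `i : Fin (n-1)`. -/
def braidRels (n : ℕ) : Set (FreeGroup (Fin (n - 1))) :=
  {r | ∃ i j : Fin (n - 1),
      ((j : ℕ) ≥ (i : ℕ) + 2 ∧
        r = FreeGroup.of i * FreeGroup.of j * (FreeGroup.of i)⁻¹ * (FreeGroup.of j)⁻¹) ∨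
      ((j : ℕ) = (i : ℕ) + 1 ∧
        r = FreeGroup.of i * FreeGroup.of j * FreeGroup.of i *
          (FreeGroup.of j * FreeGroup.of i * FreeGroup.of j)⁻¹)}

/-- The braid group on `n` strands. -/
def BraidGroup (n : ℕ) : Type := PresentedGroup (braidRels n)

instance (n : ℕ) : Group (BraidGroup n) :=
  inferInstanceAs (Group (PresentedGroup (braidRels n)))

/-- The Artin generator `σ_i` of `BraidGroup n`, for `1 ≤ i ≤ n-1` (junk value `1` otherwise). -/
def σ {n : ℕ} (i : ℕ) : BraidGroup n :=
  if h : 1 ≤ i ∧ i < n then PresentedGroup.of (⟨i - 1, by omega⟩ : Fin (n - 1)) else 1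

/-- The element `α = σ_1 σ_2 ⋯ σ_{n-1}`. -/
def α (n : ℕ) : BraidGroup n := ((List.range (n - 1)).map (fun i => σ (i + 1))).prod

/-- The half-twist `σ_j` for an index `j` taken modulo `n`, defined by conjugating
`σ_1` by the rotation `α`: `σ_{1+m} = α^m σ_1 α^{-m}`. -/
def σm {n : ℕ} (j : ℤ) : BraidGroup n := (α n) ^ (j - 1) * σ 1 * (α n) ^ (1 - j)

/-!
Let `H` be the subgroup generated by `a = σ₁σ₂⁻¹`, `b = σ₁aσ₁⁻¹` and `c = σ₁σ₃⁻¹`. The braid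
relations put `a`, `b`, `c` in `B₄'` and show that conjugation by `σ₁` preserves `H`
(`a ↦ b`, `b ↦ ba⁻¹`, `c ↦ c`). As `σ₂ = a⁻¹σ₁` and `σ₃ = c⁻¹σ₁`, every braid is `hσ₁ᵏ` with
`h ∈ H`. The exponent sum `B₄ → ℤ` vanishes on `H` and sends `σ₁` to `1`, so its kernel, which
contains `B₄'`, is `H`.
-/

open Subgroup
open scoped commutatorElement

section Group

variable {G : Type*} [Group G]

theorem mem_normalizer_closure_of_conj_mem {S : Set G} {t : G}
    (h₁ : ∀ s ∈ S, t * s * t⁻¹ ∈ closure S) (h₂ : ∀ s ∈ S, t⁻¹ * s * t ∈ closure S) :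
    t ∈ normalizer (closure S : Set G) := by
  rw [mem_normalizer_iff_map_conj_eq]
  refine le_antisymm ?_ ?_
  · rw [map_le_iff_le_comap, closure_le]
    exact h₁
  · rw [closure_le]
    exact fun s hs => ⟨_, h₂ s hs, by simp [mul_assoc]⟩

theorem ker_eq_of_sup_zpowers_eq_top {K : Type*} [Group K] (f : G →* K) {H : Subgroup G}
    {t : G} (hH : H ≤ f.ker) (ht : t ∈ normalizer (H : Set G)) (hft : ¬IsOfFinOrder (f t))
    (hgen : H ⊔ zpowers t = ⊤) : f.ker = H := by
  refine le_antisymm (fun g hg => ?_) hH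
  have hg' : g ∈ (↑(H ⊔ zpowers t) : Set G) := by simp [hgen]
  rw [coe_mul_of_right_le_normalizer_left _ _ (zpowers_le.mpr ht)] at hg'
  obtain ⟨h, hh, _, ⟨k, rfl⟩, rfl⟩ := hg'
  have hk : f t ^ k = 1 := by
    simpa [MonoidHom.mem_ker.mp (hH hh)] using MonoidHom.mem_ker.mp hg
  obtain rfl : k = 0 := by
    by_contra hk0
    exact hft (isOfFinOrder_iff_zpow_eq_one.mpr ⟨k, hk0, hk⟩)
  simpa using hh

variable {x y z : G}

theorem mul_inv_eq_commutatorElement_of_braid (h : x * y * x = y * x * y) :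
    x * y⁻¹ = ⁅y * x, y⁆ := by
  rw [commutatorElement_def, ← h]
  group

theorem mul_inv_mem_commutator_of_braid (h : x * y * x = y * x * y) :
    x * y⁻¹ ∈ commutator G := by
  rw [mul_inv_eq_commutatorElement_of_braid h]
  exact commutator_mem_commutator (mem_top _) (mem_top _)

theorem conj_eq_of_braid (h : x * y * x = y * x * y) : x * y * x⁻¹ = y⁻¹ * x * y := by
  calc x * y * x⁻¹ = y⁻¹ * (y * x * y) * x⁻¹ := by group
    _ = y⁻¹ * x * y := by rw [← h]; group

theorem closure_le_commutator_of_braid (hxy : x * y * x = y * x * y)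
    (hyz : y * z * y = z * y * z) :
    closure {x * y⁻¹, x * (x * y⁻¹) * x⁻¹, x * z⁻¹} ≤ commutator G := by
  have ha := mul_inv_mem_commutator_of_braid hxy
  rw [closure_le]
  rintro s (rfl | rfl | rfl)
  · exact ha
  · exact Normal.conj_mem inferInstance _ ha x
  · simpa [mul_assoc] using mul_mem ha (mul_inv_mem_commutator_of_braid hyz)

theorem mem_normalizer_closure_of_braid (hxy : x * y * x = y * x * y) (hxz : Commute x z) :
    x ∈ normalizer (closure {x * y⁻¹, x * (x * y⁻¹) * x⁻¹, x * z⁻¹} : Set G) := by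
  set S : Set G := {x * y⁻¹, x * (x * y⁻¹) * x⁻¹, x * z⁻¹}
  have ha : x * y⁻¹ ∈ closure S := subset_closure (Set.mem_insert _ _)
  have hb : x * (x * y⁻¹) * x⁻¹ ∈ closure S :=
    subset_closure (Set.mem_insert_of_mem _ (Set.mem_insert _ _))
  have hc : x * z⁻¹ ∈ closure S :=
    subset_closure (Set.mem_insert_of_mem _ (Set.mem_insert_of_mem _ rfl))
  have hxc : Commute x (x * z⁻¹) := (Commute.refl x).mul_right hxz.inv_right
  have hconj := conj_eq_of_braid hxy
  apply mem_normalizer_closure_of_conj_mem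
  · rintro s (rfl | rfl | rfl)
    · exact hb
    · have e : x * (x * (x * y⁻¹) * x⁻¹) * x⁻¹ = x * (x * y⁻¹) * x⁻¹ * (x * y⁻¹)⁻¹ := by
        calc _ = x * x * (x * y * x⁻¹)⁻¹ * x⁻¹ := by group
          _ = _ := by rw [hconj]; group
      rw [e]
      exact mul_mem hb (inv_mem ha)
    · rwa [hxc.mul_inv_cancel]
  · rintro s (rfl | rfl | rfl)
    · have e : x⁻¹ * (x * y⁻¹) * x = (x * (x * y⁻¹) * x⁻¹)⁻¹ * (x * y⁻¹) := by
        calc _ = y⁻¹ * (x * y) * y⁻¹ := by group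
          _ = _ := by rw [← mul_assoc, ← hconj]; group
      rw [e]
      exact mul_mem (inv_mem hb) ha
    · simpa [mul_assoc] using ha
    · rwa [hxc.inv_mul_cancel]

theorem sup_zpowers_eq_top_of_closure_eq_top (h : closure ({x, y, z} : Set G) = ⊤) :
    closure ({x * y⁻¹, x * (x * y⁻¹) * x⁻¹, x * z⁻¹} : Set G) ⊔ zpowers x = ⊤ := by
  set H := closure ({x * y⁻¹, x * (x * y⁻¹) * x⁻¹, x * z⁻¹} : Set G)
  have hx : x ∈ H ⊔ zpowers x := mem_sup_right (mem_zpowers x)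
  have hy : (x * y⁻¹)⁻¹ * x ∈ H ⊔ zpowers x :=
    mul_mem (inv_mem (mem_sup_left (subset_closure (by simp)))) hx
  have hz : (x * z⁻¹)⁻¹ * x ∈ H ⊔ zpowers x :=
    mul_mem (inv_mem (mem_sup_left (subset_closure (by simp)))) hx
  rw [mul_inv_rev, inv_inv, inv_mul_cancel_right] at hy hz
  rw [eq_top_iff, ← h, closure_le, Set.insert_subset_iff, Set.insert_subset_iff,
    Set.singleton_subset_iff]
  exact ⟨hx, hy, hz⟩

end Group

namespace BraidGroup

variable {n : ℕ}

theorem σ_eq_of {i : ℕ} (hi : 1 ≤ i) (hn : i < n) :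
    (σ i : BraidGroup n) = PresentedGroup.of (⟨i - 1, by omega⟩ : Fin (n - 1)) :=
  dif_pos ⟨hi, hn⟩

theorem closure_σ_eq_top : closure (σ '' Set.Ico 1 n : Set (BraidGroup n)) = ⊤ :=
  (eq_top_iff' _).mpr <| PresentedGroup.generated_by _ _ fun j =>
    subset_closure ⟨j + 1, ⟨by omega, by omega⟩, σ_eq_of (by omega) (by omega)⟩

theorem mk_eq_one_of_mem {r : FreeGroup (Fin (n - 1))} (h : r ∈ braidRels n) :
    PresentedGroup.mk (braidRels n) r = 1 :=
  (QuotientGroup.eq_one_iff r).mpr (subset_normalClosure h)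

theorem σ_mul_σ_mul_σ {i : ℕ} (hi : 1 ≤ i) (hn : i + 1 < n) :
    (σ i : BraidGroup n) * σ (i + 1) * σ i = σ (i + 1) * σ i * σ (i + 1) := by
  rw [σ_eq_of hi (by omega), σ_eq_of (by omega) hn]
  refine mul_inv_eq_one.mp (mk_eq_one_of_mem ⟨_, _, Or.inr ⟨?_, rfl⟩⟩)
  simp only
  omega

theorem commute_σ {i j : ℕ} (hi : 1 ≤ i) (hij : i + 2 ≤ j) (hn : j < n) :
    Commute (σ i : BraidGroup n) (σ j) := by
  rw [σ_eq_of hi (by omega), σ_eq_of (by omega) hn]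
  refine commutatorElement_eq_one_iff_commute.mp (mk_eq_one_of_mem ⟨_, _, Or.inl ⟨?_, rfl⟩⟩)
  simp only
  omega

def exponentSum (n : ℕ) : BraidGroup n →* Multiplicative ℤ :=
  PresentedGroup.toGroup (f := fun _ => Multiplicative.ofAdd 1) (by
    rintro r ⟨i, j, ⟨-, rfl⟩ | ⟨-, rfl⟩⟩ <;> simp)

theorem exponentSum_σ {i : ℕ} (hi : 1 ≤ i) (hn : i < n) :
    exponentSum n (σ i) = Multiplicative.ofAdd 1 := by
  rw [σ_eq_of hi hn]
  exact PresentedGroup.toGroup.of _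

theorem closure_σ_one_σ_two_σ_three :
    closure ({σ 1, σ 2, σ 3} : Set (BraidGroup 4)) = ⊤ := by
  convert closure_σ_eq_top using 2
  ext g
  simp only [Set.mem_image, Set.mem_Ico, Set.mem_insert_iff, Set.mem_singleton_iff]
  constructor
  · rintro (rfl | rfl | rfl) <;> exact ⟨_, by norm_num, rfl⟩
  · rintro ⟨i, ⟨h1, h4⟩, rfl⟩
    interval_cases i <;> simp

end BraidGroup

theorem B4_commutator_three_generators :
    Subgroup.closure ({σ 1 * (σ 2)⁻¹, σ 1 * (σ 1 * (σ 2)⁻¹) * (σ 1)⁻¹,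
        σ 1 * (σ 3)⁻¹} : Set (BraidGroup 4)) = commutator (BraidGroup 4) := by
  have hσ₁₂ : (σ 1 : BraidGroup 4) * σ 2 * σ 1 = σ 2 * σ 1 * σ 2 :=
    BraidGroup.σ_mul_σ_mul_σ le_rfl (by norm_num)
  have hσ₂₃ : (σ 2 : BraidGroup 4) * σ 3 * σ 2 = σ 3 * σ 2 * σ 3 :=
    BraidGroup.σ_mul_σ_mul_σ (by norm_num) (by norm_num)
  have hσ₁₃ : Commute (σ 1 : BraidGroup 4) (σ 3) :=
    BraidGroup.commute_σ le_rfl le_rfl (by norm_num)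
  have hker : Subgroup.closure {σ 1 * (σ 2)⁻¹, σ 1 * (σ 1 * (σ 2)⁻¹) * (σ 1)⁻¹,
      σ 1 * (σ 3)⁻¹} ≤ (BraidGroup.exponentSum 4).ker := by
    rw [closure_le]
    rintro _ (rfl | rfl | rfl) <;> simp [BraidGroup.exponentSum_σ]
  refine le_antisymm (closure_le_commutator_of_braid hσ₁₂ hσ₂₃) ?_
  rw [← ker_eq_of_sup_zpowers_eq_top _ hker (mem_normalizer_closure_of_braid hσ₁₂ hσ₁₃)
    (by rw [BraidGroup.exponentSum_σ le_rfl (by norm_num)]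
        exact not_isOfFinOrder_of_isMulTorsionFree (by decide))
    (sup_zpowers_eq_top_of_closure_eq_top BraidGroup.closure_σ_one_σ_two_σ_three)]
  exact Abelianization.commutator_subset_ker _
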